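/- arXiv:1605.04882 — 6 statements merged into one kernel-verified Lean document; each statement's English description precedes it below -/
import Mathlib

section
/- Let Λ₁, Λ₂ ⊂ ℝⁿ be convex and let Φ₁, Φ₂ : ℝⁿ → ℝ be C² on neighbourhoods of Λ₁, Λ₂ with ‖∇²Φ_j‖_{L^∞(Λ_j)} < ∞ (the supremum of the Hessian operator norm over Λ_j), and let A₁, A₂ > 0. Assume: (1) |∇Φ₁(ξ) − ∇Φ₂(η)| ≥ A₁ for all ξ ∈ Λ₁ and η ∈ Λ₂; (2) for j = 1, 2, every 𝔥 ∈ ℝ × ℝⁿ, and all ξ, ξ' ∈ Σ_j(𝔥) with ξ ≠ ξ', |(∇Φ_j(ξ) − ∇Φ_j(ξ')) · (ξ − ξ')/|ξ − ξ'|| ≥ A₂ |ξ − ξ'|; (3) diam(Λ₁) + diam(Λ₂) ≤ A₁A₂ / (2 (‖∇²Φ₁‖_{L^∞(Λ₁)} + ‖∇²Φ₂‖_{L^∞(Λ₂)})²). Then condition (A1) holds with D₁ = A₁A₂/2; that is, for every {j,k} = {1,2}, every 𝔥 ∈ ℝ × ℝⁿ, all ξ, ξ' ∈ Σ_j(𝔥),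 and every η ∈ Λ_k, |(∇Φ_j(ξ) − ∇Φ_j(ξ')) ∧ (∇Φ_j(ξ) − ∇Φ_k(η))| ≥ (A₁A₂/2) |ξ − ξ'|. -/
open MeasureTheory Filter
open scoped ENNReal RealInnerProductSpace FourierTransform

noncomputable section

abbrev Euc (n : ℕ) : Type := EuclideanSpace ℝ (Fin n)

/-- The wedge (cross-product magnitude) `|x ∧ y| = (|x|²|y|² − (x·y)²)^{1/2}`. -/
def wedge {F : Type*} [NormedAddCommGroup F] [InnerProductSpace ℝ F] (x y : F) : ℝ :=
  Real.sqrt (‖x‖ ^ 2 * ‖y‖ ^ 2 - ⟪x, y⟫ ^ 2)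

/-- The surface `Σ_j(𝔥) = {ξ ∈ Λ_j ∩ (Λ_k + h) : Φ_j(ξ) = Φ_k(ξ − h) + a}`. -/
def SigmaSet {n : ℕ} (Λj Λk : Set (Euc n)) (Φj Φk : Euc n → ℝ) (a : ℝ) (h : Euc n) :
    Set (Euc n) :=
  {ξ | ξ ∈ Λj ∧ ξ - h ∈ Λk ∧ Φj ξ = Φk (ξ - h) + a}

/-- Condition (A1) for the ordered pair `(j, k)`. -/
def CondA1 {n : ℕ} (Λj Λk : Set (Euc n)) (Φj Φk : Euc n → ℝ) (D₁ : ℝ) : Prop :=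
  ∀ (a : ℝ) (h : Euc n), ∀ ξ ∈ SigmaSet Λj Λk Φj Φk a h, ∀ ξ' ∈ SigmaSet Λj Λk Φj Φk a h,
    ∀ η ∈ Λk,
      D₁ * ‖ξ - ξ'‖ ≤
        wedge (gradient Φj ξ - gradient Φj ξ') (gradient Φj ξ - gradient Φk η)

/-- Condition (A2): `Φ` is `C^N` on a neighbourhood of `Λ` with all derivatives of order
`1 ≤ i ≤ N` bounded by `D₂` on `Λ`. -/
def CondA2 {n : ℕ} (N : ℕ) (Λ : Set (Euc n)) (Φ : Euc n → ℝ) (D₂ : ℝ) : Prop :=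
  ∃ U : Set (Euc n), IsOpen U ∧ Λ ⊆ U ∧ ContDiffOn ℝ N Φ U ∧
    ∀ i : ℕ, 1 ≤ i → i ≤ N → ∀ ξ ∈ Λ, ‖iteratedFDeriv ℝ i Φ ξ‖ ≤ D₂

/-- Assumption A on `(Λ₁, Λ₂)` with constants `D₁, D₂, N`. -/
def AssumptionA {n : ℕ} (N : ℕ) (D₁ D₂ : ℝ) (Λ₁ Λ₂ : Set (Euc n)) (Φ₁ Φ₂ : Euc n → ℝ) :
    Prop :=
  CondA1 Λ₁ Λ₂ Φ₁ Φ₂ D₁ ∧ CondA1 Λ₂ Λ₁ Φ₂ Φ₁ D₁ ∧ CondA2 N Λ₁ Φ₁ D₂ ∧ CondA2 N Λ₂ Φ₂ D₂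

/-- The annulus `{1/16 ≤ |ξ| ≤ 16}`. -/
def Annulus (n : ℕ) : Set (Euc n) := {ξ | 1 / 16 ≤ ‖ξ‖ ∧ ‖ξ‖ ≤ 16}

/-!
Fix `ξ ≠ ξ'` in `Σ_j(𝔥)` and `η ∈ Λ_k`, and put `w = ξ - ξ'`, `u = ∇Φ_j ξ - ∇Φ_j ξ'`,
`v = ∇Φ_j ξ - ∇Φ_k η`. For every `w` one has `|u·w| |v| - |u| |v·w| ≤ |u ∧ v| |w|`.
Curvature gives `|u·w| ≥ A₂ |w|²`, transversality `|v| ≥ A₁`, and `|u| ≤ H_j |w|`.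
Since `Φ_j - Φ_k(· - h)` equals `a` at both `ξ` and `ξ'`, the mean value theorem yields `ζ` on
the chord with `∇Φ_j ζ - ∇Φ_k (ζ - h) ⟂ w`; comparing `v` with this vector gives
`|v·w| ≤ (H_j diam Λ_j + H_k diam Λ_k) |w|`, and the diameter assumption makes the error term
`|u| |v·w|` at most half of the main term `A₁ A₂ |w|²`.
-/

open Metric

section Wedge

variable {F : Type*} [NormedAddCommGroup F] [InnerProductSpace ℝ F]

lemma wedge_nonneg (u v : F) : 0 ≤ wedge u v := Real.sqrt_nonneg _

lemma wedge_eq_norm_mul_norm_sub_smul (u v : F) :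
    wedge u v = ‖v‖ * ‖u - (⟪u, v⟫ / ‖v‖ ^ 2) • v‖ := by
  rcases eq_or_ne v 0 with rfl | hv
  · simp [wedge]
  have hv2 : ‖v‖ ^ 2 ≠ 0 := by positivity
  have hsq : ‖u‖ ^ 2 * ‖v‖ ^ 2 - ⟪u, v⟫ ^ 2 = (‖v‖ * ‖u - (⟪u, v⟫ / ‖v‖ ^ 2) • v‖) ^ 2 := by
    rw [mul_pow, norm_sub_sq_real, real_inner_smul_right, norm_smul, Real.norm_eq_abs, mul_pow,
      sq_abs]
    field_simp
    ring
  rw [wedge, hsq, Real.sqrt_sq (by positivity)]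

lemma abs_inner_div_norm_sq_mul_norm_le (u v : F) : |⟪u, v⟫ / ‖v‖ ^ 2| * ‖v‖ ≤ ‖u‖ := by
  rcases eq_or_ne v 0 with rfl | hv
  · simp
  have hv' : 0 < ‖v‖ := norm_pos_iff.2 hv
  rw [abs_div, abs_pow, abs_norm, div_mul_eq_mul_div, div_le_iff₀ (by positivity)]
  nlinarith [abs_real_inner_le_norm u v]

/-- Writing `u = u⊥ + r v` with `u⊥ ⟂ v`, the bound reduces to Cauchy–Schwarz for `u⊥`, since
`‖v‖ ‖u⊥‖ = wedge u v` and `|r| ‖v‖ ≤ ‖u‖`. -/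
lemma abs_inner_mul_norm_sub_le_wedge_mul_norm (u v w : F) :
    |⟪u, w⟫| * ‖v‖ - ‖u‖ * |⟪v, w⟫| ≤ wedge u v * ‖w‖ := by
  set r := ⟪u, v⟫ / ‖v‖ ^ 2
  have hsplit : ⟪u, w⟫ = ⟪u - r • v, w⟫ + r * ⟪v, w⟫ := by
    rw [inner_sub_left, real_inner_smul_left]; ring
  have hu : |⟪u, w⟫| ≤ ‖u - r • v‖ * ‖w‖ + |r| * |⟪v, w⟫| := by
    rw [hsplit, ← abs_mul]
    exact (abs_add_le _ _).trans (add_le_add_left (abs_real_inner_le_norm _ _) _)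
  suffices |⟪u, w⟫| * ‖v‖ ≤ wedge u v * ‖w‖ + ‖u‖ * |⟪v, w⟫| by linarith
  calc |⟪u, w⟫| * ‖v‖ ≤ (‖u - r • v‖ * ‖w‖ + |r| * |⟪v, w⟫|) * ‖v‖ := by gcongr
    _ = wedge u v * ‖w‖ + |r| * ‖v‖ * |⟪v, w⟫| := by
      rw [wedge_eq_norm_mul_norm_sub_smul]; ring
    _ ≤ wedge u v * ‖w‖ + ‖u‖ * |⟪v, w⟫| := by
      gcongr; exact abs_inner_div_norm_sq_mul_norm_le u v

end Wedge

lemma mul_mul_add_mul_le_of_add_le_div {Hj Hk Dj Dk c : ℝ} (hHj : 0 ≤ Hj) (hHk : 0 ≤ Hk)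
    (hDj : 0 ≤ Dj) (hDk : 0 ≤ Dk) (hc : 0 ≤ c) (hD : Dj + Dk ≤ c / (2 * (Hj + Hk) ^ 2)) :
    Hj * (Hj * Dj + Hk * Dk) ≤ c / 2 := by
  have hsq : (Hj + Hk) ^ 2 * (Dj + Dk) ≤ c / 2 := by
    rcases eq_or_lt_of_le (sq_nonneg (Hj + Hk)) with h0 | hpos
    · rw [← h0, zero_mul]; positivity
    · rw [le_div_iff₀ (by positivity)] at hD
      linarith
  nlinarith [mul_nonneg (mul_nonneg hHj hHj) hDk, mul_nonneg (mul_nonneg hHj hHk) hDj,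
    mul_nonneg (mul_nonneg hHk hHk) hDj, mul_nonneg (mul_nonneg hHj hHk) hDk,
    mul_nonneg (mul_nonneg hHk hHk) hDk]

lemma diam_add_diam_le_of_ediam_add_ediam_le {X : Type*} [PseudoMetricSpace X] {s t : Set X}
    {c : ℝ} (hc : 0 ≤ c) (h : ediam s + ediam t ≤ ENNReal.ofReal c) :
    ediam s ≠ ⊤ ∧ ediam t ≠ ⊤ ∧ diam s + diam t ≤ c := by
  have hs : ediam s ≠ ⊤ := ne_top_of_le_ne_top ENNReal.ofReal_ne_top (le_self_add.trans h)
  have ht : ediam t ≠ ⊤ := ne_top_of_le_ne_top ENNReal.ofReal_ne_top (le_add_self.trans h)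
  refine ⟨hs, ht, ?_⟩
  rw [diam, diam, ← ENNReal.toReal_add hs ht]
  exact ENNReal.toReal_le_of_le_ofReal hc h

lemma differentiableAt_of_contDiffOn {F : Type*} [NormedAddCommGroup F] [NormedSpace ℝ F]
    {f : F → ℝ} {s : Set F} (hf : ∃ U, IsOpen U ∧ s ⊆ U ∧ ContDiffOn ℝ 2 f U) {x : F}
    (hx : x ∈ s) : DifferentiableAt ℝ f x := by
  obtain ⟨U, hU, hsU, hfU⟩ := hf
  exact (hfU.differentiableOn (by norm_num)).differentiableAt (hU.mem_nhds (hsU hx))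

section Gradient

variable {F : Type*} [NormedAddCommGroup F] [InnerProductSpace ℝ F] [CompleteSpace F]

lemma ContDiffOn.differentiableAt_gradient {f : F → ℝ} {U : Set F} (hf : ContDiffOn ℝ 2 f U)
    (hU : IsOpen U) {x : F} (hx : x ∈ U) : DifferentiableAt ℝ (gradient f) x := by
  have hf' : DifferentiableAt ℝ (fderiv ℝ f) x :=
    ((hf.fderiv_of_isOpen hU (by norm_num)).differentiableOn one_ne_zero).differentiableAt
      (hU.mem_nhds hx)
  exact (InnerProductSpace.toDual ℝ F).symm.differentiableAt.comp x hf'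

lemma Convex.norm_gradient_sub_le {f : F → ℝ} {s : Set F} (hs : Convex ℝ s)
    (hf : ∃ U, IsOpen U ∧ s ⊆ U ∧ ContDiffOn ℝ 2 f U) {H : ℝ}
    (hH : ∀ x ∈ s, ‖fderiv ℝ (gradient f) x‖ ≤ H) {x y : F} (hx : x ∈ s) (hy : y ∈ s) :
    ‖gradient f x - gradient f y‖ ≤ H * ‖x - y‖ := by
  obtain ⟨U, hU, hsU, hfU⟩ := hf
  exact hs.norm_image_sub_le_of_norm_fderiv_le
    (fun z hz ↦ hfU.differentiableAt_gradient hU (hsU hz)) hH hy hx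

lemma abs_inner_gradient_sub_gradient_le {Λj Λk : Set F} (hcj : Convex ℝ Λj)
    (hck : Convex ℝ Λk) (hbj : ediam Λj ≠ ⊤) (hbk : ediam Λk ≠ ⊤) {Φj Φk : F → ℝ}
    (hUj : ∃ U, IsOpen U ∧ Λj ⊆ U ∧ ContDiffOn ℝ 2 Φj U)
    (hUk : ∃ U, IsOpen U ∧ Λk ⊆ U ∧ ContDiffOn ℝ 2 Φk U) {Hj Hk : ℝ}
    (hHj : ∀ x ∈ Λj, ‖fderiv ℝ (gradient Φj) x‖ ≤ Hj)
    (hHk : ∀ x ∈ Λk, ‖fderiv ℝ (gradient Φk) x‖ ≤ Hk) {ξ ζ ζ' η w : F} (hξ : ξ ∈ Λj)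
    (hζ : ζ ∈ Λj) (hζ' : ζ' ∈ Λk) (hη : η ∈ Λk)
    (horth : ⟪gradient Φj ζ - gradient Φk ζ', w⟫ = 0) :
    |⟪gradient Φj ξ - gradient Φk η, w⟫| ≤ (Hj * diam Λj + Hk * diam Λk) * ‖w‖ := by
  have hj : ‖gradient Φj ξ - gradient Φj ζ‖ ≤ Hj * diam Λj :=
    (hcj.norm_gradient_sub_le hUj hHj hξ hζ).trans <| by
      gcongr
      · exact (norm_nonneg _).trans (hHj ξ hξ)
      · exact dist_eq_norm ξ ζ ▸ dist_le_diam_of_mem' hbj hξ hζ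
  have hk : ‖gradient Φk ζ' - gradient Φk η‖ ≤ Hk * diam Λk :=
    (hck.norm_gradient_sub_le hUk hHk hζ' hη).trans <| by
      gcongr
      · exact (norm_nonneg _).trans (hHk η hη)
      · exact dist_eq_norm ζ' η ▸ dist_le_diam_of_mem' hbk hζ' hη
  have hsplit : ⟪gradient Φj ξ - gradient Φk η, w⟫
      = ⟪gradient Φj ξ - gradient Φj ζ, w⟫ + ⟪gradient Φk ζ' - gradient Φk η, w⟫ := by
    rw [← sub_add_sub_cancel (gradient Φj ξ) (gradient Φj ζ),
      ← sub_add_sub_cancel _ _ (gradient Φk η),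
      inner_add_left, inner_add_left, horth, zero_add]
  calc |⟪gradient Φj ξ - gradient Φk η, w⟫|
      ≤ ‖gradient Φj ξ - gradient Φj ζ‖ * ‖w‖ + ‖gradient Φk ζ' - gradient Φk η‖ * ‖w‖ := by
        rw [hsplit]
        exact (abs_add_le _ _).trans
          (add_le_add (abs_real_inner_le_norm _ _) (abs_real_inner_le_norm _ _))
    _ ≤ (Hj * diam Λj + Hk * diam Λk) * ‖w‖ := by
        rw [add_mul]; gcongr

end Gradient

lemma exists_inner_gradient_sub_gradient_eq_zero {n : ℕ} {Λj Λk : Set (Euc n)}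
    (hcj : Convex ℝ Λj) (hck : Convex ℝ Λk) {Φj Φk : Euc n → ℝ}
    (hΦj : ∀ x ∈ Λj, DifferentiableAt ℝ Φj x) (hΦk : ∀ x ∈ Λk, DifferentiableAt ℝ Φk x)
    {a : ℝ} {h ξ ξ' : Euc n} (hξ : ξ ∈ SigmaSet Λj Λk Φj Φk a h)
    (hξ' : ξ' ∈ SigmaSet Λj Λk Φj Φk a h) :
    ∃ ζ ∈ Λj, ζ - h ∈ Λk ∧ ⟪gradient Φj ζ - gradient Φk (ζ - h), ξ - ξ'⟫ = 0 := by
  set s : Set (Euc n) := Λj ∩ (fun x ↦ -h + x) ⁻¹' Λk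
  have hs : Convex ℝ s := hcj.inter (hck.translate_preimage_right (-h))
  have hmem : ∀ {x}, x ∈ s ↔ x ∈ Λj ∧ x - h ∈ Λk := by
    intro x; simp [s, neg_add_eq_sub]
  have hderiv : ∀ x ∈ s, HasFDerivWithinAt (fun x ↦ Φj x - Φk (x - h))
      (fderiv ℝ Φj x - fderiv ℝ Φk (x - h)) s x := by
    intro x hx
    rw [hmem] at hx
    exact ((hΦj x hx.1).hasFDerivAt.sub
      ((hΦk _ hx.2).hasFDerivAt.comp x ((hasFDerivAt_id x).sub_const h))).hasFDerivWithinAt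
  have hξs : ξ ∈ s := hmem.2 ⟨hξ.1, hξ.2.1⟩
  have hξ's : ξ' ∈ s := hmem.2 ⟨hξ'.1, hξ'.2.1⟩
  obtain ⟨ζ, hζ, hζeq⟩ := domain_mvt hderiv hs hξ's hξs
  obtain ⟨hζj, hζk⟩ := hmem.1 (hs.segment_subset hξ's hξs hζ)
  refine ⟨ζ, hζj, hζk, ?_⟩
  rw [inner_sub_left, inner_gradient_left, inner_gradient_left]
  simp only [sub_apply] at hζeq
  linarith [hξ.2.2, hξ'.2.2]

lemma condA1_of_diam_add_diam_le {n : ℕ} {Λj Λk : Set (Euc n)} (hcj : Convex ℝ Λj)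
    (hck : Convex ℝ Λk) {Φj Φk : Euc n → ℝ}
    (hUj : ∃ U : Set (Euc n), IsOpen U ∧ Λj ⊆ U ∧ ContDiffOn ℝ 2 Φj U)
    (hUk : ∃ U : Set (Euc n), IsOpen U ∧ Λk ⊆ U ∧ ContDiffOn ℝ 2 Φk U) {Hj Hk : ℝ}
    (hHj : ∀ ξ ∈ Λj, ‖fderiv ℝ (gradient Φj) ξ‖ ≤ Hj)
    (hHk : ∀ ξ ∈ Λk, ‖fderiv ℝ (gradient Φk) ξ‖ ≤ Hk) {A₁ A₂ : ℝ} (hA₁ : 0 < A₁)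
    (hA₂ : 0 < A₂) (htrans : ∀ ξ ∈ Λj, ∀ η ∈ Λk, A₁ ≤ ‖gradient Φj ξ - gradient Φk η‖)
    (hcurv : ∀ (a : ℝ) (h : Euc n), ∀ ξ ∈ SigmaSet Λj Λk Φj Φk a h,
        ∀ ξ' ∈ SigmaSet Λj Λk Φj Φk a h, ξ ≠ ξ' →
          A₂ * ‖ξ - ξ'‖ ≤ |⟪gradient Φj ξ - gradient Φj ξ', ξ - ξ'⟫| / ‖ξ - ξ'‖)
    (hdiam : ediam Λj + ediam Λk ≤ ENNReal.ofReal (A₁ * A₂ / (2 * (Hj + Hk) ^ 2))) :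
    CondA1 Λj Λk Φj Φk (A₁ * A₂ / 2) := by
  intro a h ξ hξ ξ' hξ' η hη
  rcases eq_or_ne ξ ξ' with rfl | hne
  · simpa using wedge_nonneg _ _
  obtain ⟨hbj, hbk, hD⟩ := diam_add_diam_le_of_ediam_add_ediam_le (by positivity) hdiam
  obtain ⟨ζ, hζj, hζk, hζ⟩ := exists_inner_gradient_sub_gradient_eq_zero hcj hck
    (fun _ ↦ differentiableAt_of_contDiffOn hUj) (fun _ ↦ differentiableAt_of_contDiffOn hUk)
    hξ hξ'
  set w := ξ - ξ'
  set u := gradient Φj ξ - gradient Φj ξ'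
  set v := gradient Φj ξ - gradient Φk η
  have hw : 0 < ‖w‖ := norm_pos_iff.2 (sub_ne_zero.2 hne)
  have hHj0 : 0 ≤ Hj := (norm_nonneg _).trans (hHj ξ hξ.1)
  have hu : ‖u‖ ≤ Hj * ‖w‖ := hcj.norm_gradient_sub_le hUj hHj hξ.1 hξ'.1
  have huw : A₂ * ‖w‖ ^ 2 ≤ |⟪u, w⟫| := by
    have := hcurv a h ξ hξ ξ' hξ' hne
    rwa [le_div_iff₀ hw, mul_assoc, ← sq] at this
  have hv : A₁ ≤ ‖v‖ := htrans ξ hξ.1 η hη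
  have hvw : |⟪v, w⟫| ≤ (Hj * diam Λj + Hk * diam Λk) * ‖w‖ :=
    abs_inner_gradient_sub_gradient_le hcj hck hbj hbk hUj hUk hHj hHk hξ.1 hζj hζk hη hζ
  have hH : Hj * (Hj * diam Λj + Hk * diam Λk) ≤ A₁ * A₂ / 2 :=
    mul_mul_add_mul_le_of_add_le_div hHj0 ((norm_nonneg _).trans (hHk η hη)) diam_nonneg
      diam_nonneg (by positivity) hD
  refine le_of_mul_le_mul_right ?_ hw
  calc A₁ * A₂ / 2 * ‖w‖ * ‖w‖
      = A₂ * ‖w‖ ^ 2 * A₁ - A₁ * A₂ / 2 * ‖w‖ ^ 2 := by ring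
    _ ≤ |⟪u, w⟫| * ‖v‖ - Hj * ‖w‖ * ((Hj * diam Λj + Hk * diam Λk) * ‖w‖) := by
        have := mul_le_mul_of_nonneg_right hH (sq_nonneg ‖w‖)
        have : A₂ * ‖w‖ ^ 2 * A₁ ≤ |⟪u, w⟫| * ‖v‖ := by gcongr
        nlinarith
    _ ≤ |⟪u, w⟫| * ‖v‖ - ‖u‖ * |⟪v, w⟫| := by gcongr
    _ ≤ wedge u v * ‖w‖ := abs_inner_mul_norm_sub_le_wedge_mul_norm u v w

/-- `H₁, H₂` are bounds for `‖∇²Φ₁‖_{L^∞(Λ₁)}`, `‖∇²Φ₂‖_{L^∞(Λ₂)}`. -/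
theorem stmt3 {n : ℕ} (Λ₁ Λ₂ : Set (Euc n)) (hc₁ : Convex ℝ Λ₁) (hc₂ : Convex ℝ Λ₂)
    (Φ₁ Φ₂ : Euc n → ℝ)
    (hU₁ : ∃ U : Set (Euc n), IsOpen U ∧ Λ₁ ⊆ U ∧ ContDiffOn ℝ 2 Φ₁ U)
    (hU₂ : ∃ U : Set (Euc n), IsOpen U ∧ Λ₂ ⊆ U ∧ ContDiffOn ℝ 2 Φ₂ U)
    (H₁ H₂ : ℝ)
    (hH₁ : ∀ ξ ∈ Λ₁, ‖fderiv ℝ (gradient Φ₁) ξ‖ ≤ H₁)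
    (hH₂ : ∀ ξ ∈ Λ₂, ‖fderiv ℝ (gradient Φ₂) ξ‖ ≤ H₂)
    (A₁ A₂ : ℝ) (hA₁ : 0 < A₁) (hA₂ : 0 < A₂)
    (htrans : ∀ ξ ∈ Λ₁, ∀ η ∈ Λ₂, A₁ ≤ ‖gradient Φ₁ ξ - gradient Φ₂ η‖)
    (hcurv₁ : ∀ (a : ℝ) (h : Euc n), ∀ ξ ∈ SigmaSet Λ₁ Λ₂ Φ₁ Φ₂ a h,
        ∀ ξ' ∈ SigmaSet Λ₁ Λ₂ Φ₁ Φ₂ a h, ξ ≠ ξ' →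
          A₂ * ‖ξ - ξ'‖ ≤ |⟪gradient Φ₁ ξ - gradient Φ₁ ξ', ξ - ξ'⟫| / ‖ξ - ξ'‖)
    (hcurv₂ : ∀ (a : ℝ) (h : Euc n), ∀ ξ ∈ SigmaSet Λ₂ Λ₁ Φ₂ Φ₁ a h,
        ∀ ξ' ∈ SigmaSet Λ₂ Λ₁ Φ₂ Φ₁ a h, ξ ≠ ξ' →
          A₂ * ‖ξ - ξ'‖ ≤ |⟪gradient Φ₂ ξ - gradient Φ₂ ξ', ξ - ξ'⟫| / ‖ξ - ξ'‖)
    (hdiam : EMetric.diam Λ₁ + EMetric.diam Λ₂ ≤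
        ENNReal.ofReal (A₁ * A₂ / (2 * (H₁ + H₂) ^ 2))) :
    CondA1 Λ₁ Λ₂ Φ₁ Φ₂ (A₁ * A₂ / 2) ∧ CondA1 Λ₂ Λ₁ Φ₂ Φ₁ (A₁ * A₂ / 2) := by
  refine ⟨condA1_of_diam_add_diam_le hc₁ hc₂ hU₁ hU₂ hH₁ hH₂ hA₁ hA₂ htrans hcurv₁ hdiam,
    condA1_of_diam_add_diam_le hc₂ hc₁ hU₂ hU₁ hH₂ hH₁ hA₁ hA₂ (fun ξ hξ η hη ↦ ?_) hcurv₂ ?_⟩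
  · rw [norm_sub_rev]
    exact htrans η hη ξ hξ
  · rwa [add_comm (ediam Λ₂), add_comm H₂]
end
end

section
/- Let ℓ ≥ 2, let (a, h) ∈ ℝ × ℝ^ℓ, and let x, y ∈ {z ∈ ℝ^ℓ : |z| = |z − h| + a} with x ≠ 0, y ≠ 0, and x ≠ h. Then |x/|x| − y/|y||² ≥ |x − y|² · |x/|x| − (x−h)/|x−h||⁴ · |x−h|² / (16 |x| |y| |x−h|² + 4 (|x−h| + |x|)² |y|²). -/
open scoped RealInnerProductSpace

noncomputable section

/-- **Lemma 2.2:** a quantitative curvature bound on the sets `{|z| = |z-h| + a}`. -/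
theorem stmt4 {ℓ : ℕ} (hl : 2 ≤ ℓ) (a : ℝ) (h x y : Euc ℓ)
    (hx : ‖x‖ = ‖x - h‖ + a) (hy : ‖y‖ = ‖y - h‖ + a)
    (hx0 : x ≠ 0) (hy0 : y ≠ 0) (hxh : x ≠ h) :
    ‖x - y‖ ^ 2 * ‖‖x‖⁻¹ • x - ‖x - h‖⁻¹ • (x - h)‖ ^ 4 * ‖x - h‖ ^ 2 /
        (16 * ‖x‖ * ‖y‖ * ‖x - h‖ ^ 2 + 4 * (‖x - h‖ + ‖x‖) ^ 2 * ‖y‖ ^ 2)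
      ≤ ‖‖x‖⁻¹ • x - ‖y‖⁻¹ • y‖ ^ 2 := by
  have hxh' : x - h ≠ 0 := sub_ne_zero.mpr hxh
  have hA : (0:ℝ) < ‖x‖ := norm_pos_iff.mpr hx0
  have hB : (0:ℝ) < ‖y‖ := norm_pos_iff.mpr hy0
  have hC : (0:ℝ) < ‖x - h‖ := norm_pos_iff.mpr hxh'
  set A := ‖x‖ with hAdef
  set B := ‖y‖ with hBdef
  set C := ‖x - h‖ with hCdef
  set α := ⟪x, y⟫ with hαdef
  set β := ⟪x, x - h⟫ with hβdef
  set γ := ⟪y, x - h⟫ with hγdef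
  set t := ‖A⁻¹ • x - B⁻¹ • y‖ with htdef
  set s := ‖A⁻¹ • x - C⁻¹ • (x - h)‖ with hsdef
  have hu : ‖A⁻¹ • x‖ = 1 := norm_smul_inv_norm hx0
  have hv : ‖B⁻¹ • y‖ = 1 := norm_smul_inv_norm hy0
  have hw : ‖C⁻¹ • (x - h)‖ = 1 := norm_smul_inv_norm hxh'
  have ht0 : 0 ≤ t := norm_nonneg _
  have hs0 : 0 ≤ s := norm_nonneg _
  have ht2 : t ≤ 2 := by
    calc t ≤ ‖A⁻¹ • x‖ + ‖B⁻¹ • y‖ := norm_sub_le _ _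
    _ = 2 := by rw [hu, hv]; norm_num
  have hs2 : s ≤ 2 := by
    calc s ≤ ‖A⁻¹ • x‖ + ‖C⁻¹ • (x - h)‖ := norm_sub_le _ _
    _ = 2 := by rw [hu, hw]; norm_num
  have htsq : t ^ 2 = 2 - 2 * (A⁻¹ * B⁻¹ * α) := by
    rw [htdef, @norm_sub_sq_real, hu, hv, real_inner_smul_left, real_inner_smul_right]
    ring
  have hssq : s ^ 2 = 2 - 2 * (A⁻¹ * C⁻¹ * β) := by
    rw [hsdef, @norm_sub_sq_real, hu, hw, real_inner_smul_left, real_inner_smul_right]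
    ring
  have hq : ⟪A⁻¹ • x - B⁻¹ • y, C⁻¹ • (x - h)⟫ = A⁻¹ * C⁻¹ * β - B⁻¹ * C⁻¹ * γ := by
    rw [inner_sub_left, real_inner_smul_left, real_inner_smul_left, real_inner_smul_right,
      real_inner_smul_right]
    ring
  have hqle : |A⁻¹ * C⁻¹ * β - B⁻¹ * C⁻¹ * γ| ≤ t := by
    rw [← hq]
    have h1 := abs_real_inner_le_norm (A⁻¹ • x - B⁻¹ • y) (C⁻¹ • (x - h))
    rwa [hw, mul_one] at h1
  have hD : ‖y - h‖ = B + C - A := by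
    have h1 : A = C + a := hx
    have h2 : B = ‖y - h‖ + a := hy
    linarith
  have hKexp : ‖y - h‖ ^ 2 = (B ^ 2 - 2 * α + A ^ 2) + 2 * (γ - β) + C ^ 2 := by
    have e : y - h = (y - x) + (x - h) := by abel
    rw [e, @norm_add_sq_real, @norm_sub_sq_real, inner_sub_left, real_inner_comm x y]
  have hK : A * B + A * C + γ = B * C + α + β := by
    rw [hD] at hKexp
    linear_combination (-1/2) * hKexp
  have hγval : γ = B * C + α + β - A * B - A * C := by linarith
  have hxy0 : ‖x - y‖ ^ 2 = A ^ 2 - 2 * α + B ^ 2 := by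
    rw [@norm_sub_sq_real]
  set X := ‖x - y‖ with hXdef
  have hX0 : 0 ≤ X := norm_nonneg _
  clear_value t s X
  clear_value α β γ
  clear_value A B C
  clear hx hy hαdef hβdef hγdef hAdef hBdef hCdef htdef hsdef hXdef hu hv hw hq hD hKexp
  clear hx0 hy0 hxh hxh' hl h x y
  have hiden : (A - B) * C * s ^ 2
      = B * (2 * C * (A⁻¹ * C⁻¹ * β - B⁻¹ * C⁻¹ * γ) - A * t ^ 2) := by
    rw [hssq, htsq, hγval]
    field_simp
    ring
  have hcore : |(A - B) * C * s ^ 2| ≤ 2 * (A + C) * B * t := by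
    obtain ⟨hq1, hq2⟩ := abs_le.mp hqle
    rw [hiden, abs_le]
    have h1 : 0 ≤ B * C * (t - (A⁻¹ * C⁻¹ * β - B⁻¹ * C⁻¹ * γ)) :=
      mul_nonneg (mul_nonneg hB.le hC.le) (by linarith)
    have h2 : 0 ≤ B * C * ((A⁻¹ * C⁻¹ * β - B⁻¹ * C⁻¹ * γ) + t) :=
      mul_nonneg (mul_nonneg hB.le hC.le) (by linarith)
    have h3 : 0 ≤ A * B * t ^ 2 := by positivity
    have h4 : 0 ≤ A * B * t := by positivity
    have h5 : 0 ≤ A * B * t * (2 - t) :=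
      mul_nonneg h4 (by linarith)
    constructor
    · linarith [h1, h2, h3, h4, h5]
    · linarith [h1, h2, h3, h4, h5]
  have hcoresq : ((A - B) * C * s ^ 2) ^ 2 ≤ (2 * (A + C) * B * t) ^ 2 := by
    obtain ⟨h1, h2⟩ := abs_le.mp hcore
    exact sq_le_sq' h1 h2
  have hxy : X ^ 2 = (A - B) ^ 2 + A * B * t ^ 2 := by
    rw [hxy0, htsq]
    field_simp
    ring
  have hden : (0:ℝ) < 16 * A * B * C ^ 2 + 4 * (C + A) ^ 2 * B ^ 2 := by positivity
  rw [div_le_iff₀ hden, hxy]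
  have hs2sq : s ^ 2 ≤ 4 := by
    have h6 : (0:ℝ) ≤ (2 - s) * (2 + s) := mul_nonneg (by linarith) (by linarith)
    linarith
  have hs4 : s ^ 4 ≤ 16 := by
    have h7 : (0:ℝ) ≤ (4 - s ^ 2) * (4 + s ^ 2) :=
      mul_nonneg (by linarith) (by positivity)
    linarith
  have hpos : (0:ℝ) ≤ A * B * t ^ 2 * C ^ 2 := by positivity
  linarith [mul_le_mul_of_nonneg_right hs4 hpos, hcoresq]
end
end

section
/- Let n ≥ 1, m₁, m₂ ≥ 0, and ξ, η ∈ ℝⁿ with ξ ≠ 0 and η ≠ 0. Then |ξ/⟨ξ⟩_{m₁} − η/⟨η⟩_{m₂}|² = ( (m₂|ξ| + m₁|η|)(m₂|ξ| − m₁|η|) / (⟨ξ⟩_{m₁} ⟨η⟩_{m₂} (|ξ| ⟨η⟩_{m₂} + |η| ⟨ξ⟩_{m₁})) )² + (2 |ξ| |η| / (⟨ξ⟩_{m₁} ⟨η⟩_{m₂})) · (1 − ξ·η/(|ξ| |η|)). -/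
open scoped RealInnerProductSpace

noncomputable section

/-- `⟨ζ⟩_m = (m² + |ζ|²)^{1/2}`. -/
def hnorm {n : ℕ} (m : ℝ) (ζ : Euc n) : ℝ := Real.sqrt (m ^ 2 + ‖ζ‖ ^ 2)

/-- **The transversality identity (2.4) for the Klein-Gordon phases.** -/
theorem stmt6 {n : ℕ} (hn : 1 ≤ n) (m₁ m₂ : ℝ) (h₁ : 0 ≤ m₁) (h₂ : 0 ≤ m₂)
    (ξ η : Euc n) (hξ : ξ ≠ 0) (hη : η ≠ 0) :
    ‖(hnorm m₁ ξ)⁻¹ • ξ - (hnorm m₂ η)⁻¹ • η‖ ^ 2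
      = ((m₂ * ‖ξ‖ + m₁ * ‖η‖) * (m₂ * ‖ξ‖ - m₁ * ‖η‖) /
            (hnorm m₁ ξ * hnorm m₂ η * (‖ξ‖ * hnorm m₂ η + ‖η‖ * hnorm m₁ ξ))) ^ 2
        + 2 * ‖ξ‖ * ‖η‖ / (hnorm m₁ ξ * hnorm m₂ η) * (1 - ⟪ξ, η⟫ / (‖ξ‖ * ‖η‖)) := by
  have hx : (0:ℝ) < ‖ξ‖ := norm_pos_iff.mpr hξ
  have hy : (0:ℝ) < ‖η‖ := norm_pos_iff.mpr hη
  set A := hnorm m₁ ξ with hAdef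
  set B := hnorm m₂ η with hBdef
  have hA : (0:ℝ) < A := Real.sqrt_pos.mpr (by positivity)
  have hB : (0:ℝ) < B := Real.sqrt_pos.mpr (by positivity)
  have hA2 : A ^ 2 = m₁ ^ 2 + ‖ξ‖ ^ 2 := Real.sq_sqrt (by positivity)
  have hB2 : B ^ 2 = m₂ ^ 2 + ‖η‖ ^ 2 := Real.sq_sqrt (by positivity)
  have e1 : (m₂ * ‖ξ‖ + m₁ * ‖η‖) * (m₂ * ‖ξ‖ - m₁ * ‖η‖)
      = (B * ‖ξ‖ - A * ‖η‖) * (‖ξ‖ * B + ‖η‖ * A) := by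
    linear_combination ‖η‖ ^ 2 * hA2 - ‖ξ‖ ^ 2 * hB2
  have hden : ‖ξ‖ * B + ‖η‖ * A ≠ 0 := by positivity
  rw [norm_sub_sq_real, norm_smul, norm_smul, real_inner_smul_left, real_inner_smul_right,
    Real.norm_eq_abs, Real.norm_eq_abs, abs_of_nonneg (inv_nonneg.mpr hA.le),
    abs_of_nonneg (inv_nonneg.mpr hB.le), e1]
  field_simp
  ring
end
end

section
/- Let n ≥ 1, R₀ ≥ 1, D₁, D₂ > 0, and let Λ_j, Λ_j* ⊂ ℝⁿ with Λ_j* + B(0, 1/R₀) ⊂ Λ_j for j = 1, 2. Let Φ₁, Φ₂ : ℝⁿ → ℝ be C² on open neighbourhoods of Λ₁, Λ₂. Fix {j,k} = {1,2} and 𝔥 = (a, h) ∈ ℝ × ℝⁿ, and assume the transversality bound |∇Φ_j(ζ) − ∇Φ_k(ζ − h)| ≥ D₁/D₂ for every ζ ∈ Λ_j ∩ (Λ_k + h). Let r ≥ 2 (D₂/D₁) R₀ and suppose ξ₀ ∈ (Λ_j* + B(0, 1/(2R₀))) ∩ (Λ_k* + h + B(0, 1/(2R₀))) satisfies |Φ_j(ξ₀)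 − Φ_k(ξ₀ − h) − a| ≤ 1/r. Then there exists ξ ∈ Σ_j(𝔥) with |ξ₀ − ξ| ≤ D₂/(D₁ r). -/
open MeasureTheory Filter
open scoped ENNReal RealInnerProductSpace FourierTransform

noncomputable section

/-!
With `F ξ = Φ₁ ξ - Φ₂ (ξ - h) - a`, the closed ball `B(ξ₀, 1/(2R₀))` lies in `Λ₁ ∩ (Λ₂ + h)`,
so `‖∇F‖ ≥ c = D₁/D₂` on it, and `|F ξ₀| ≤ 1/r ≤ c/(2R₀)`. For `κ < c`, a minimiser of
`|F z| + κ‖z - ξ₀‖` over the ball is a zero of `F` or lies on the boundary sphere: at an interior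
point with `F ≠ 0` the slope of `|F|` is `‖∇F‖ > κ`, so descending along `-sign(F) ∇F` would
lower the value. Either way it is an approximate zero within `|F ξ₀|/κ` of `ξ₀`, and letting
`κ ↑ c`, compactness of the ball produces a genuine zero within `|F ξ₀|/c ≤ D₂/(D₁ r)`.
-/

open Filter Topology Set Metric

theorem HasFDerivAt.norm_le_of_eventually_sub_le {E : Type*} [NormedAddCommGroup E]
    [NormedSpace ℝ E] {f : E → ℝ} {f' : E →L[ℝ] ℝ} {x : E} {κ : ℝ} (hf : HasFDerivAt f f' x)
    (hκ : 0 ≤ κ) (hle : ∀ᶠ z in 𝓝 x, f x - f z ≤ κ * ‖z - x‖) : ‖f'‖ ≤ κ := by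
  have hdir : ∀ v, -f' v ≤ κ * ‖v‖ := by
    intro v
    set p : ℝ → ℝ := fun t => f (x + t • v) + κ * ‖v‖ * t
    have hray : HasDerivAt (fun t : ℝ => x + t • v) v 0 := by
      simpa using ((hasDerivAt_id (0 : ℝ)).smul_const v).const_add x
    have hp : HasDerivAt p (f' v + κ * ‖v‖) 0 :=
      (hf.comp_hasDerivAt_of_eq 0 hray (by simp)).add
        (by simpa using (hasDerivAt_id (0 : ℝ)).const_mul (κ * ‖v‖))
    have hmin : IsLocalMinOn p (Ici 0) 0 := by
      filter_upwards [nhdsWithin_le_nhds (hray.continuousAt.eventually (by simpa using hle)),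
        self_mem_nhdsWithin] with t ht (htpos : 0 ≤ t)
      simp only [add_sub_cancel_left, norm_smul, Real.norm_of_nonneg htpos] at ht
      simp only [p, zero_smul, add_zero, mul_zero]
      linarith
    have := hmin.hasFDerivWithinAt_nonneg hp.hasFDerivAt.hasFDerivWithinAt (y := 1)
      (mem_posTangentConeAt_of_segment_subset (by simp [segment_eq_Icc, Icc_subset_Ici_self]))
    simp only [ContinuousLinearMap.toSpanSingleton_apply, smul_eq_mul, one_mul] at this
    linarith
  refine ContinuousLinearMap.opNorm_le_bound _ hκ fun v => abs_le.mpr ⟨?_, ?_⟩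
  · linarith [hdir v]
  · simpa using hdir (-v)

theorem norm_le_of_isLocalMin_abs_add_norm_sub {E : Type*} [NormedAddCommGroup E]
    [NormedSpace ℝ E] {F : E → ℝ} {F' : E →L[ℝ] ℝ} {ζ ξ₀ : E} {κ : ℝ} (hF : HasFDerivAt F F' ζ)
    (hFζ : F ζ ≠ 0) (hκ : 0 ≤ κ) (hmin : IsLocalMin (fun z => |F z| + κ * ‖z - ξ₀‖) ζ) :
    ‖F'‖ ≤ κ := by
  have hsign : ‖(SignType.sign (F ζ) : ℝ)‖ = 1 := by
    rcases hFζ.lt_or_gt with hneg | hpos <;> simp [*]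
  have := (hF.abs hFζ).norm_le_of_eventually_sub_le hκ <| hmin.mono fun z hz => by
    have := mul_le_mul_of_nonneg_left (norm_sub_le_norm_sub_add_norm_sub z ζ ξ₀) hκ
    simp only at hz
    linarith
  rwa [norm_smul, hsign, one_mul] at this

theorem IsCompact.exists_le_of_forall_lt {α : Type*} [TopologicalSpace α] {X : Set α}
    (hX : IsCompact X) {g : α → ℝ} (hg : ContinuousOn g X) {m : ℝ}
    (h : ∀ δ > m, ∃ z ∈ X, g z < δ) : ∃ z ∈ X, g z ≤ m := by
  obtain ⟨z₁, hz₁, -⟩ := h (m + 1) (by linarith)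
  obtain ⟨z, hz, hmin⟩ := hX.exists_isMinOn ⟨z₁, hz₁⟩ hg
  refine ⟨z, hz, le_of_forall_gt fun δ hδ => ?_⟩
  obtain ⟨w, hw, hwδ⟩ := h δ hδ
  exact (hmin hw).trans_lt hwδ

section NearZero

variable {E : Type*} [NormedAddCommGroup E] [NormedSpace ℝ E] [ProperSpace E] {F : E → ℝ}
  {F' : E → E →L[ℝ] ℝ} {ξ₀ : E} {ρ c : ℝ}

theorem exists_abs_le_near_of_le_norm_deriv
    (hF : ∀ z ∈ closedBall ξ₀ ρ, HasFDerivAt F (F' z) z)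
    (hF' : ∀ z ∈ closedBall ξ₀ ρ, c ≤ ‖F' z‖) (hρ : |F ξ₀| ≤ c * ρ) {κ : ℝ} (hκ : 0 < κ)
    (hκc : κ < c) :
    ∃ ζ ∈ closedBall ξ₀ ρ, |F ζ| ≤ (1 - κ / c) * |F ξ₀| ∧ ‖ζ - ξ₀‖ ≤ |F ξ₀| / κ := by
  have hc : 0 < c := hκ.trans hκc
  have hρ₀ : 0 ≤ ρ := nonneg_of_mul_nonneg_right ((abs_nonneg _).trans hρ) hc
  have hcont : ContinuousOn (fun z => |F z| + κ * ‖z - ξ₀‖) (closedBall ξ₀ ρ) :=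
    fun z hz => ((hF z hz).continuousAt.abs.add (by fun_prop)).continuousWithinAt
  obtain ⟨ζ, hζ, hmin⟩ := (isCompact_closedBall ξ₀ ρ).exists_isMinOn
    ⟨ξ₀, mem_closedBall_self hρ₀⟩ hcont
  have hle : |F ζ| + κ * ‖ζ - ξ₀‖ ≤ |F ξ₀| := by
    simpa using hmin (mem_closedBall_self hρ₀)
  have hζρ : ‖ζ - ξ₀‖ ≤ ρ := mem_closedBall_iff_norm.mp hζ
  have hcases : F ζ = 0 ∨ ‖ζ - ξ₀‖ = ρ := by
    refine or_iff_not_imp_right.mpr fun hρne => by_contra fun hFζ => ?_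
    have hball : closedBall ξ₀ ρ ∈ 𝓝 ζ := mem_of_superset
      (isOpen_ball.mem_nhds (mem_ball_iff_norm.mpr (hζρ.lt_of_ne hρne))) ball_subset_closedBall
    have := norm_le_of_isLocalMin_abs_add_norm_sub (hF ζ hζ) hFζ hκ.le
      (hmin.isLocalMin hball)
    linarith [hF' ζ hζ]
  refine ⟨ζ, hζ, ?_, (le_div_iff₀ hκ).mpr (by linarith [abs_nonneg (F ζ)])⟩
  rcases hcases with hzero | hbdry
  · rw [hzero, abs_zero]
    exact mul_nonneg (by rw [sub_nonneg, div_le_one hc]; exact hκc.le) (abs_nonneg _)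
  · have : κ / c * |F ξ₀| ≤ κ * ρ := by
      rw [div_mul_eq_mul_div, div_le_iff₀ hc, mul_assoc]
      exact mul_le_mul_of_nonneg_left (by linarith) hκ.le
    rw [hbdry] at hle
    linarith

theorem exists_zero_near_of_le_norm_deriv
    (hF : ∀ z ∈ closedBall ξ₀ ρ, HasFDerivAt F (F' z) z)
    (hF' : ∀ z ∈ closedBall ξ₀ ρ, c ≤ ‖F' z‖) (hc : 0 < c) (hρ : |F ξ₀| ≤ c * ρ) :
    ∃ ζ ∈ closedBall ξ₀ ρ, F ζ = 0 ∧ ‖ζ - ξ₀‖ ≤ |F ξ₀| / c := by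
  set ε := |F ξ₀|
  set err : ℝ → ℝ := fun κ => max ((1 - κ / c) * ε) (ε / κ - ε / c)
  have herr : Tendsto err (𝓝[<] c) (𝓝 0) := by
    have : ContinuousAt err c := by fun_prop (disch := exact hc.ne')
    simpa [err, hc.ne'] using this.tendsto.mono_left nhdsWithin_le_nhds
  have hcont : ContinuousOn (fun z => max |F z| (‖z - ξ₀‖ - ε / c)) (closedBall ξ₀ ρ) :=
    fun z hz => ((hF z hz).continuousAt.abs.sup' (by fun_prop)).continuousWithinAt
  obtain ⟨ζ, hζ, hle⟩ := (isCompact_closedBall ξ₀ ρ).exists_le_of_forall_lt hcont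
    (m := 0) fun δ hδ => by
      obtain ⟨κ, hκδ, hκ, hκc⟩ :=
        ((herr.eventually (gt_mem_nhds hδ)).and (Ioo_mem_nhdsLT hc)).exists
      obtain ⟨ζ, hζ, hFζ, hdist⟩ :=
        exists_abs_le_near_of_le_norm_deriv hF hF' hρ hκ hκc
      exact ⟨ζ, hζ, lt_of_le_of_lt (max_le_max hFζ (by linarith)) hκδ⟩
  rw [max_le_iff, abs_nonpos_iff, sub_nonpos] at hle
  exact ⟨ζ, hζ, hle⟩

end NearZero

theorem hasFDerivAt_sub_comp_sub_const {E : Type*} [NormedAddCommGroup E] [NormedSpace ℝ E]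
    {Φ₁ Φ₂ : E → ℝ} {z h : E} (a : ℝ) (h₁ : DifferentiableAt ℝ Φ₁ z)
    (h₂ : DifferentiableAt ℝ Φ₂ (z - h)) :
    HasFDerivAt (fun x => Φ₁ x - Φ₂ (x - h) - a) (fderiv ℝ Φ₁ z - fderiv ℝ Φ₂ (z - h)) z := by
  simpa using (h₁.hasFDerivAt.sub (h₂.hasFDerivAt.comp z
    ((hasFDerivAt_id z).sub_const h))).sub_const a

theorem closedBall_subset_of_add_closedBall_subset {E : Type*} [SeminormedAddCommGroup E]
    {Λ Λs : Set E} {R : ℝ} (hsub : ∀ ξ ∈ Λs, ∀ y : E, ‖y‖ ≤ 1 / R → ξ + y ∈ Λ) {η ξ₀ : E}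
    (hη : η ∈ Λs) (hξ₀ : ‖ξ₀ - η‖ ≤ 1 / (2 * R)) : closedBall ξ₀ (1 / (2 * R)) ⊆ Λ := by
  intro ζ hζ
  have hdist : ‖ζ - η‖ ≤ 1 / R := calc
    ‖ζ - η‖ ≤ ‖ζ - ξ₀‖ + ‖ξ₀ - η‖ := norm_sub_le_norm_sub_add_norm_sub ζ ξ₀ η
    _ ≤ 1 / (2 * R) + 1 / (2 * R) := add_le_add (mem_closedBall_iff_norm.mp hζ) hξ₀
    _ = 1 / R := by ring
  simpa using hsub η hη (ζ - η) hdist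

theorem stmt7_general {n : ℕ} (R₀ D₁ D₂ : ℝ) (hR₀ : 1 ≤ R₀) (hD₁ : 0 < D₁)
    (hD₂ : 0 < D₂) (Λ₁ Λ₂ Λ₁s Λ₂s : Set (Euc n))
    (hsub₁ : ∀ ξ ∈ Λ₁s, ∀ y : Euc n, ‖y‖ ≤ 1 / R₀ → ξ + y ∈ Λ₁)
    (hsub₂ : ∀ ξ ∈ Λ₂s, ∀ y : Euc n, ‖y‖ ≤ 1 / R₀ → ξ + y ∈ Λ₂)
    (Φ₁ Φ₂ : Euc n → ℝ)
    (hU₁ : ∃ U : Set (Euc n), IsOpen U ∧ Λ₁ ⊆ U ∧ ContDiffOn ℝ 2 Φ₁ U)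
    (hU₂ : ∃ U : Set (Euc n), IsOpen U ∧ Λ₂ ⊆ U ∧ ContDiffOn ℝ 2 Φ₂ U)
    (a : ℝ) (h : Euc n)
    (htrans : ∀ ζ : Euc n, ζ ∈ Λ₁ → ζ - h ∈ Λ₂ →
      D₁ / D₂ ≤ ‖gradient Φ₁ ζ - gradient Φ₂ (ζ - h)‖)
    (r : ℝ) (hr : 2 * (D₂ / D₁) * R₀ ≤ r)
    (ξ₀ : Euc n)
    (hξ₀₁ : ∃ η ∈ Λ₁s, ‖ξ₀ - η‖ ≤ 1 / (2 * R₀))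
    (hξ₀₂ : ∃ η ∈ Λ₂s, ‖ξ₀ - (η + h)‖ ≤ 1 / (2 * R₀))
    (hval : |Φ₁ ξ₀ - Φ₂ (ξ₀ - h) - a| ≤ 1 / r) :
    ∃ ξ ∈ SigmaSet Λ₁ Λ₂ Φ₁ Φ₂ a h, ‖ξ₀ - ξ‖ ≤ D₂ / (D₁ * r) := by
  obtain ⟨U₁, hU₁, hΛU₁, hΦ₁⟩ := hU₁
  obtain ⟨U₂, hU₂, hΛU₂, hΦ₂⟩ := hU₂
  obtain ⟨η₁, hη₁, hξη₁⟩ := hξ₀₁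
  obtain ⟨η₂, hη₂, hξη₂⟩ := hξ₀₂
  have hR₀pos : 0 < R₀ := one_pos.trans_le hR₀
  have hr₀ : 0 < r := lt_of_lt_of_le (by positivity) hr
  have hball₁ := closedBall_subset_of_add_closedBall_subset hsub₁ hη₁ hξη₁
  have hball₂ := closedBall_subset_of_add_closedBall_subset hsub₂ hη₂
    (ξ₀ := ξ₀ - h) (by rwa [sub_sub, add_comm])
  have hmem : ∀ z ∈ closedBall ξ₀ (1 / (2 * R₀)), z ∈ Λ₁ ∧ z - h ∈ Λ₂ := fun z hz =>
    ⟨hball₁ hz, hball₂ (by simpa [mem_closedBall_iff_norm] using hz)⟩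
  have hderiv : ∀ z ∈ closedBall ξ₀ (1 / (2 * R₀)),
      HasFDerivAt (fun x => Φ₁ x - Φ₂ (x - h) - a) (fderiv ℝ Φ₁ z - fderiv ℝ Φ₂ (z - h)) z :=
    fun z hz => hasFDerivAt_sub_comp_sub_const a
      ((hΦ₁.differentiableOn two_ne_zero).differentiableAt (hU₁.mem_nhds (hΛU₁ (hmem z hz).1)))
      ((hΦ₂.differentiableOn two_ne_zero).differentiableAt (hU₂.mem_nhds (hΛU₂ (hmem z hz).2)))
  have hslope : ∀ z ∈ closedBall ξ₀ (1 / (2 * R₀)),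
      D₁ / D₂ ≤ ‖fderiv ℝ Φ₁ z - fderiv ℝ Φ₂ (z - h)‖ := fun z hz => by
    simpa [gradient, ← map_sub] using htrans z (hmem z hz).1 (hmem z hz).2
  have hsmall : |Φ₁ ξ₀ - Φ₂ (ξ₀ - h) - a| ≤ D₁ / D₂ * (1 / (2 * R₀)) :=
    hval.trans ((one_div_le_one_div_of_le (by positivity) hr).trans_eq (by field_simp))
  obtain ⟨ξ, hξ, hzero, hdist⟩ :=
    exists_zero_near_of_le_norm_deriv hderiv hslope (by positivity) hsmall
  refine ⟨ξ, ⟨(hmem ξ hξ).1, (hmem ξ hξ).2, by linarith⟩, ?_⟩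
  rw [norm_sub_rev]
  calc ‖ξ - ξ₀‖ ≤ |Φ₁ ξ₀ - Φ₂ (ξ₀ - h) - a| / (D₁ / D₂) := hdist
    _ ≤ 1 / r / (D₁ / D₂) := by gcongr
    _ = D₂ / (D₁ * r) := by field_simp

/-- **Lemma 2.3: points nearly on the resonance surface are close to `Σ_j(𝔥)`.** -/
theorem stmt7 {n : ℕ} (hn : 1 ≤ n) (R₀ D₁ D₂ : ℝ) (hR₀ : 1 ≤ R₀) (hD₁ : 0 < D₁)
    (hD₂ : 0 < D₂) (Λ₁ Λ₂ Λ₁s Λ₂s : Set (Euc n))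
    (hsub₁ : ∀ ξ ∈ Λ₁s, ∀ y : Euc n, ‖y‖ ≤ 1 / R₀ → ξ + y ∈ Λ₁)
    (hsub₂ : ∀ ξ ∈ Λ₂s, ∀ y : Euc n, ‖y‖ ≤ 1 / R₀ → ξ + y ∈ Λ₂)
    (Φ₁ Φ₂ : Euc n → ℝ)
    (hU₁ : ∃ U : Set (Euc n), IsOpen U ∧ Λ₁ ⊆ U ∧ ContDiffOn ℝ 2 Φ₁ U)
    (hU₂ : ∃ U : Set (Euc n), IsOpen U ∧ Λ₂ ⊆ U ∧ ContDiffOn ℝ 2 Φ₂ U)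
    (a : ℝ) (h : Euc n)
    (htrans : ∀ ζ : Euc n, ζ ∈ Λ₁ → ζ - h ∈ Λ₂ →
      D₁ / D₂ ≤ ‖gradient Φ₁ ζ - gradient Φ₂ (ζ - h)‖)
    (r : ℝ) (hr : 2 * (D₂ / D₁) * R₀ ≤ r)
    (ξ₀ : Euc n)
    (hξ₀₁ : ∃ η ∈ Λ₁s, ‖ξ₀ - η‖ ≤ 1 / (2 * R₀))
    (hξ₀₂ : ∃ η ∈ Λ₂s, ‖ξ₀ - (η + h)‖ ≤ 1 / (2 * R₀))
    (hval : |Φ₁ ξ₀ - Φ₂ (ξ₀ - h) - a| ≤ 1 / r) :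
    ∃ ξ ∈ SigmaSet Λ₁ Λ₂ Φ₁ Φ₂ a h, ‖ξ₀ - ξ‖ ≤ D₂ / (D₁ * r) :=
  stmt7_general R₀ D₁ D₂ hR₀ hD₁ hD₂ Λ₁ Λ₂ Λ₁s Λ₂s hsub₁ hsub₂ Φ₁ Φ₂ hU₁ hU₂ a h htrans r hr ξ₀ hξ₀₁
    hξ₀₂ hval
end
end

section
/- Let d ≥ 1, let h ∈ ℝ^d and a ∈ ℝ, and let x, y ∈ {z ∈ ℝ^d : |z| = |z − h| + a} with x, y, x − h, y − h all nonzero. Then |x/|x| − y/|y||² ≥ (1/(4 |x| |y|)) · ( |x ∧ y|²/(|x| |y|) + |(x − h) ∧ (y − h)|²/(|x − h| |y − h|) ). -/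
open scoped RealInnerProductSpace

noncomputable section

lemma wedge_sq {F : Type*} [NormedAddCommGroup F] [InnerProductSpace ℝ F] (x y : F) :
    wedge x y ^ 2 = ‖x‖ ^ 2 * ‖y‖ ^ 2 - ⟪x, y⟫ ^ 2 := by
  have h := abs_real_inner_le_norm x y
  apply Real.sq_sqrt
  nlinarith [abs_nonneg (⟪x, y⟫ : ℝ), sq_abs (⟪x, y⟫ : ℝ), norm_nonneg x, norm_nonneg y]

set_option maxHeartbeats 1000000 in
/-- **The angle-versus-wedge inequality (6.4) on the sets `{|z| = |z-h| + a}`.** -/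
theorem stmt16 {d : ℕ} (hd : 1 ≤ d) (a : ℝ) (h x y : Euc d)
    (hx : ‖x‖ = ‖x - h‖ + a) (hy : ‖y‖ = ‖y - h‖ + a)
    (hx0 : x ≠ 0) (hy0 : y ≠ 0) (hxh : x - h ≠ 0) (hyh : y - h ≠ 0) :
    1 / (4 * ‖x‖ * ‖y‖) *
        (wedge x y ^ 2 / (‖x‖ * ‖y‖) + wedge (x - h) (y - h) ^ 2 / (‖x - h‖ * ‖y - h‖))
      ≤ ‖‖x‖⁻¹ • x - ‖y‖⁻¹ • y‖ ^ 2 := by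
  have hX : (0:ℝ) < ‖x‖ := norm_pos_iff.2 hx0
  have hY : (0:ℝ) < ‖y‖ := norm_pos_iff.2 hy0
  have hX' : (0:ℝ) < ‖x - h‖ := norm_pos_iff.2 hxh
  have hY' : (0:ℝ) < ‖y - h‖ := norm_pos_iff.2 hyh
  have hCS1 : |(⟪x, y⟫ : ℝ)| ≤ ‖x‖ * ‖y‖ := abs_real_inner_le_norm x y
  have hCS2 : |(⟪x - h, y - h⟫ : ℝ)| ≤ ‖x - h‖ * ‖y - h‖ := abs_real_inner_le_norm _ _
  have habs1 := abs_le.1 hCS1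
  have habs2 := abs_le.1 hCS2
  -- norm of difference identities
  have hsub : ‖x - y‖ ^ 2 = ‖x‖ ^ 2 + ‖y‖ ^ 2 - 2 * ⟪x, y⟫ := by
    rw [@norm_sub_sq_real]; ring
  have hsub' : ‖x - y‖ ^ 2 = ‖x - h‖ ^ 2 + ‖y - h‖ ^ 2 - 2 * ⟪x - h, y - h⟫ := by
    have : x - y = (x - h) - (y - h) := by abel
    rw [this, @norm_sub_sq_real]; ring
  -- key equality P = Q
  have hdiff : ‖x‖ - ‖y‖ = ‖x - h‖ - ‖y - h‖ := by rw [hx, hy]; ring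
  have hPQ : ‖x‖ * ‖y‖ - ⟪x, y⟫ = ‖x - h‖ * ‖y - h‖ - ⟪x - h, y - h⟫ := by
    nlinarith [hsub, hsub', hdiff]
  set P : ℝ := ‖x‖ * ‖y‖ - ⟪x, y⟫ with hPdef
  have hP0 : 0 ≤ P := by simp only [hPdef]; linarith [habs1.2, neg_abs_le (⟪x, y⟫ : ℝ)]
  -- wedge bounds
  have hw1 : wedge x y ^ 2 / (‖x‖ * ‖y‖) ≤ 2 * P := by
    rw [div_le_iff₀ (by positivity), wedge_sq]
    nlinarith [habs1.1, habs1.2, mul_pos hX hY]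
  have hw2 : wedge (x - h) (y - h) ^ 2 / (‖x - h‖ * ‖y - h‖) ≤ 2 * P := by
    rw [div_le_iff₀ (by positivity), wedge_sq, hPQ]
    nlinarith [habs2.1, habs2.2, mul_pos hX' hY']
  -- RHS value
  have hRHS : ‖‖x‖⁻¹ • x - ‖y‖⁻¹ • y‖ ^ 2 = 2 * P / (‖x‖ * ‖y‖) := by
    rw [@norm_sub_sq_real, norm_smul, norm_smul, real_inner_smul_left, real_inner_smul_right]
    simp only [norm_inv, norm_norm, hPdef]
    field_simp
    ring
  rw [hRHS]
  have hsum : wedge x y ^ 2 / (‖x‖ * ‖y‖) + wedge (x - h) (y - h) ^ 2 / (‖x - h‖ * ‖y - h‖)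
      ≤ 4 * P := by linarith
  rw [div_mul_eq_mul_div, one_mul, div_le_div_iff₀ (by positivity) (by positivity)]
  have hh := mul_le_mul_of_nonneg_right hsum (le_of_lt (mul_pos hX hY))
  nlinarith [mul_pos hX hY, hP0]
end
end

section
/- Let n ≥ 1, let m₁, m₂, m₃ ≥ 0, let x, y ∈ ℝⁿ with ⟨x⟩_{m₁} > 0 and ⟨y⟩_{m₂} > 0, and fix a sign ± ∈ {+, −}. Then | ⟨x − y⟩_{m₃}² − (⟨x⟩_{m₁} ± ⟨y⟩_{m₂})² | = 2 · | (m₁ |y| − m₂ |x|)² / (⟨x⟩_{m₁} ⟨y⟩_{m₂} + |x| |y| + m₁ m₂) + |x| |y| ± x·y ± ((m₁ ± m₂)² − m₃²)/2 |, where the signs on both occurrences of ± agree with the fixed sign. -/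
open scoped RealInnerProductSpace

noncomputable section

lemma abs_eq_two_abs_of_neg {a b : ℝ} (h : a = -2 * b) : |a| = 2 * |b| := by
  rw [h, abs_mul]; norm_num

lemma abs_eq_two_abs_of_pos {a b : ℝ} (h : a = 2 * b) : |a| = 2 * |b| := by
  rw [h, abs_mul]; norm_num

/-- **The general modulation identity (8.1).**  The sign `s ∈ {1, −1}` encodes `±`. -/
theorem stmt17 {n : ℕ} (hn : 1 ≤ n) (m₁ m₂ m₃ : ℝ)
    (h₁ : 0 ≤ m₁) (h₂ : 0 ≤ m₂) (h₃ : 0 ≤ m₃)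
    (x y : Euc n) (hx : 0 < hnorm m₁ x) (hy : 0 < hnorm m₂ y)
    (s : ℝ) (hs : s = 1 ∨ s = -1) :
    |hnorm m₃ (x - y) ^ 2 - (hnorm m₁ x + s * hnorm m₂ y) ^ 2|
      = 2 * |(m₁ * ‖y‖ - m₂ * ‖x‖) ^ 2 / (hnorm m₁ x * hnorm m₂ y + ‖x‖ * ‖y‖ + m₁ * m₂)
            + ‖x‖ * ‖y‖ + s * ⟪x, y⟫ + s * ((m₁ + s * m₂) ^ 2 - m₃ ^ 2) / 2| := by
  set A := hnorm m₁ x with hA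
  set B := hnorm m₂ y with hB
  have hA2 : A ^ 2 = m₁ ^ 2 + ‖x‖ ^ 2 := Real.sq_sqrt (by positivity)
  have hB2 : B ^ 2 = m₂ ^ 2 + ‖y‖ ^ 2 := Real.sq_sqrt (by positivity)
  have hC2 : hnorm m₃ (x - y) ^ 2 = m₃ ^ 2 + ‖x - y‖ ^ 2 := Real.sq_sqrt (by positivity)
  have hsub : ‖x - y‖ ^ 2 = ‖x‖ ^ 2 - 2 * ⟪x, y⟫ + ‖y‖ ^ 2 := norm_sub_sq_real x y
  have hD : 0 < A * B + ‖x‖ * ‖y‖ + m₁ * m₂ := by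
    have h5 := mul_pos hx hy
    have h6 := mul_nonneg (norm_nonneg x) (norm_nonneg y)
    have h7 := mul_nonneg h₁ h₂
    linarith
  have hAB : (A * B) ^ 2 = (m₁ ^ 2 + ‖x‖ ^ 2) * (m₂ ^ 2 + ‖y‖ ^ 2) := by
    rw [mul_pow, hA2, hB2]
  have hfrac : (m₁ * ‖y‖ - m₂ * ‖x‖) ^ 2 / (A * B + ‖x‖ * ‖y‖ + m₁ * m₂)
      = A * B - ‖x‖ * ‖y‖ - m₁ * m₂ := by
    rw [div_eq_iff hD.ne']
    linear_combination -hAB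
  rcases hs with h | h <;> subst h
  · apply abs_eq_two_abs_of_neg
    rw [hC2, hsub, hfrac]
    linear_combination -hA2 - hB2
  · apply abs_eq_two_abs_of_pos
    rw [hC2, hsub, hfrac]
    linear_combination -hA2 - hB2
end
end
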